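/- For any linear forms ℓ_1,...,ℓ_s in Q*, one has ann(u_{ℓ_1},...,u_{ℓ_s}) = I if and only if ℓ_1,...,ℓ_s generate Q* as a Q-module. -/

import Mathlib

/-!
Since `⟨u_ℓ | f⟩ = ℓ(f mod I)`, the sequence `u_ℓ` determines `ℓ`, and `f · u_ℓ = u_{f·ℓ}`.
Hence `f ∈ ann(u_{ℓ_1},…,u_{ℓ_s})` iff `f mod I` kills every `ℓ_i`, i.e. iff
`(g · ℓ_i)(f mod I) = ℓ_i(g f) = 0` for all `g` and `i`: the annihilator is the preimage of the
subspace of `Q` orthogonal to the `Q`-submodule `N ⊆ Q*` generated by the `ℓ_i`. In finite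
dimension that orthogonal is zero iff `N = Q*`.
-/

open MvPolynomial

/-- `⟨u ∣ f⟩ = ∑_m f_m u(m)`, the pairing of a sequence `u : ℕ^n → K`
with a polynomial `f ∈ K[X_1,…,X_n]`. -/
noncomputable def seqBracket {K : Type*} [Field K] {n : ℕ}
    (u : (Fin n →₀ ℕ) → K) (f : MvPolynomial (Fin n) K) : K :=
  ∑ m ∈ f.support, f.coeff m * u m

/-- The action of polynomials on sequences: `(f·u)(m) = ⟨u ∣ X^m f⟩`. -/
noncomputable def seqAct {K : Type*} [Field K] {n : ℕ}
    (f : MvPolynomial (Fin n) K) (u : (Fin n →₀ ℕ) → K) : (Fin n →₀ ℕ) → K :=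
  fun m => seqBracket u (monomial m 1 * f)

/-- The sequence `u_ℓ(m) = ℓ(X^m mod I)` attached to a linear form `ℓ` on `K[X]/I`. -/
noncomputable def useq {K : Type*} [Field K] {n : ℕ}
    (I : Ideal (MvPolynomial (Fin n) K))
    (ℓ : Module.Dual K (MvPolynomial (Fin n) K ⧸ I)) : (Fin n →₀ ℕ) → K :=
  fun m => ℓ (Ideal.Quotient.mk I (monomial m 1))

theorem Subspace.dualCoannihilator_eq_bot_iff_eq_top {K V : Type*} [Field K] [AddCommGroup V]
    [Module K V] [FiniteDimensional K V] {W : Subspace K (Module.Dual K V)} :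
    W.dualCoannihilator = ⊥ ↔ W = ⊤ := by
  refine ⟨fun h => ?_, fun h => h ▸ Submodule.dualCoannihilator_top⟩
  rw [← Subspace.dualCoannihilator_dualAnnihilator_eq (W := W), h, Submodule.dualAnnihilator_bot]

namespace Module.Dual

variable {K A ι : Type*} [CommRing K] [CommRing A] [Algebra K A] [Fintype ι]

/-- Its range is the `A`-submodule generated by the `ℓ i` for the action
`(a • φ) b = φ (a * b)` of `A` on `Module.Dual K A`. -/
noncomputable def combination (ℓ : ι → Module.Dual K A) : (ι → A) →ₗ[K] Module.Dual K A :=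
  ∑ i, ((LinearMap.mul K A).compr₂ (ℓ i)).comp (LinearMap.proj i)

theorem combination_apply (ℓ : ι → Module.Dual K A) (g : ι → A) :
    combination ℓ g = ∑ i, (ℓ i).comp (LinearMap.mulLeft K (g i)) := by
  simp only [combination, LinearMap.sum_apply]
  rfl

theorem mem_dualCoannihilator_range_combination_iff (ℓ : ι → Module.Dual K A) (a : A) :
    a ∈ (LinearMap.range (combination ℓ)).dualCoannihilator ↔
      ∀ i, (ℓ i).comp (LinearMap.mulLeft K a) = 0 := by
  classical
  simp only [Submodule.mem_dualCoannihilator, LinearMap.ext_iff, LinearMap.comp_apply,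
    LinearMap.mulLeft_apply, LinearMap.zero_apply]
  refine ⟨fun h i b => ?_, ?_⟩
  · simpa [combination_apply, LinearMap.sum_apply, Pi.single_apply, mul_comm, apply_ite] using
      h _ ⟨Pi.single i b, rfl⟩
  · rintro h _ ⟨g, rfl⟩
    simp only [combination_apply, LinearMap.sum_apply, LinearMap.comp_apply,
      LinearMap.mulLeft_apply, mul_comm (g _), h, Finset.sum_const_zero]

end Module.Dual

theorem seqBracket_useq {K : Type*} [Field K] {n : ℕ} (I : Ideal (MvPolynomial (Fin n) K))
    (ℓ : Module.Dual K (MvPolynomial (Fin n) K ⧸ I)) (f : MvPolynomial (Fin n) K) :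
    seqBracket (useq I ℓ) f = ℓ (Ideal.Quotient.mk I f) := by
  conv_rhs => rw [f.as_sum]
  simp only [seqBracket, useq, map_sum]
  refine Finset.sum_congr rfl fun m _ => ?_
  have hm : monomial m (coeff m f) = coeff m f • monomial m (1 : K) := by
    rw [smul_monomial, smul_eq_mul, mul_one]
  rw [hm, ← Ideal.Quotient.mkₐ_eq_mk K, map_smul, map_smul, smul_eq_mul]

theorem useq_eq_zero_iff {K : Type*} [Field K] {n : ℕ} (I : Ideal (MvPolynomial (Fin n) K))
    (ℓ : Module.Dual K (MvPolynomial (Fin n) K ⧸ I)) :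
    useq I ℓ = 0 ↔ ℓ = 0 := by
  refine ⟨fun h => LinearMap.ext fun q => ?_, fun h => funext fun m => by simp [useq, h]⟩
  obtain ⟨f, rfl⟩ := Ideal.Quotient.mk_surjective q
  simp [← seqBracket_useq, h, seqBracket]

theorem seqAct_useq {K : Type*} [Field K] {n : ℕ} (I : Ideal (MvPolynomial (Fin n) K))
    (ℓ : Module.Dual K (MvPolynomial (Fin n) K ⧸ I)) (f : MvPolynomial (Fin n) K) :
    seqAct f (useq I ℓ) = useq I (ℓ.comp (LinearMap.mulLeft K (Ideal.Quotient.mk I f))) := by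
  funext m
  rw [seqAct, seqBracket_useq, useq, LinearMap.comp_apply, LinearMap.mulLeft_apply, map_mul,
    mul_comm]

theorem stmt4_general {K : Type*} [Field K] {n : ℕ}
    (I : Ideal (MvPolynomial (Fin n) K))
    (hI : FiniteDimensional K (MvPolynomial (Fin n) K ⧸ I))
    (s : ℕ) (ℓ : Fin s → Module.Dual K (MvPolynomial (Fin n) K ⧸ I)) :
    (∀ f : MvPolynomial (Fin n) K,
        (∀ i, seqAct f (useq I (ℓ i)) = 0) ↔ f ∈ I) ↔
    (∀ φ : Module.Dual K (MvPolynomial (Fin n) K ⧸ I),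
        ∃ g : Fin s → MvPolynomial (Fin n) K ⧸ I,
          φ = ∑ i, (ℓ i).comp (LinearMap.mulLeft K (g i))) := by
  set W := (LinearMap.range (Module.Dual.combination ℓ)).dualCoannihilator
  have hann (f : MvPolynomial (Fin n) K) :
      (∀ i, seqAct f (useq I (ℓ i)) = 0) ↔ Ideal.Quotient.mk I f ∈ W := by
    simp only [W, seqAct_useq, useq_eq_zero_iff,
      Module.Dual.mem_dualCoannihilator_range_combination_iff]
  calc (∀ f, (∀ i, seqAct f (useq I (ℓ i)) = 0) ↔ f ∈ I)
      ↔ ∀ q, q ∈ W ↔ q ∈ (⊥ : Submodule K _) := by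
        simp only [hann, ← Ideal.Quotient.eq_zero_iff_mem, Submodule.mem_bot,
          Ideal.Quotient.mk_surjective.forall]
    _ ↔ LinearMap.range (Module.Dual.combination ℓ) = ⊤ := by
        rw [← SetLike.ext_iff, Subspace.dualCoannihilator_eq_bot_iff_eq_top]
    _ ↔ _ := by
        rw [LinearMap.range_eq_top]
        simp only [Function.Surjective, Module.Dual.combination_apply, eq_comm]

/-- For linear forms `ℓ_1,…,ℓ_s ∈ Q*`, one has
`ann(u_{ℓ_1},…,u_{ℓ_s}) = I` if and only if `ℓ_1,…,ℓ_s` generate `Q*` as a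
`Q`-module (every `φ ∈ Q*` can be written `φ = ∑ g_i·ℓ_i` with `g_i ∈ Q`,
where `(g·ℓ)(h) = ℓ(gh)`). -/
theorem stmt4 {K : Type*} [Field K] {n : ℕ} (hn : 1 ≤ n)
    (I : Ideal (MvPolynomial (Fin n) K))
    (hI : FiniteDimensional K (MvPolynomial (Fin n) K ⧸ I))
    (s : ℕ) (ℓ : Fin s → Module.Dual K (MvPolynomial (Fin n) K ⧸ I)) :
    (∀ f : MvPolynomial (Fin n) K,
        (∀ i, seqAct f (useq I (ℓ i)) = 0) ↔ f ∈ I) ↔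
    (∀ φ : Module.Dual K (MvPolynomial (Fin n) K ⧸ I),
        ∃ g : Fin s → MvPolynomial (Fin n) K ⧸ I,
          φ = ∑ i, (ℓ i).comp (LinearMap.mulLeft K (g i))) :=
  stmt4_general I hI s ℓ
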